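/- For all planar binary trees x and y, one has I_{x/y} = I_x * I_y and I_{x∖y} = I_x ∖ I_y in ℤY. -/

import Mathlib

/-- A planar binary tree: either the trivial tree (a leaf) or an ordered pair of
planar binary trees. -/
inductive PBT : Type
  | leaf : PBT
  | node : PBT → PBT → PBT
  deriving DecidableEq

namespace PBT

/-- Number of internal vertices of a planar binary tree. -/
def size : PBT → ℕ
  | leaf => 0
  | node a b => a.size + b.size + 1

/-- One covering move of the Tamari order: `Rot x y` holds when `y` is obtained
from `x` by replacing some subtree of the form `((a,b),c)` by `(a,(b,c))`. -/
inductive Rot : PBT → PBT → Prop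
  | rot (a b c : PBT) : Rot (node (node a b) c) (node a (node b c))
  | left {a a' : PBT} (b : PBT) : Rot a a' → Rot (node a b) (node a' b)
  | right (a : PBT) {b b' : PBT} : Rot b b' → Rot (node a b) (node a b')

/-- The Tamari order: reflexive-transitive closure of `Rot`. -/
def tle (x y : PBT) : Prop := Relation.ReflTransGen Rot x y

/-- Grafting of `x` on the leftmost leaf of `y` : the operation `x / y`. -/
def over' : PBT → PBT → PBT
  | x, leaf => x
  | x, node y₁ y₂ => node (over' x y₁) y₂

/-- Grafting of `y` on the rightmost leaf of `x` : the operation `x ∖ y`. -/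
def under : PBT → PBT → PBT
  | leaf, y => y
  | node x₁ x₂, y => node x₁ (under x₂ y)

theorem Rot.size_eq {x y : PBT} (h : Rot x y) : x.size = y.size := by
  induction h <;> simp [size] <;> omega

theorem tle.size_eq {x y : PBT} (h : tle x y) : x.size = y.size := by
  induction h with
  | refl => rfl
  | tail _ h ih => rw [ih, h.size_eq]

theorem finite_size_le (n : ℕ) : {z : PBT | z.size ≤ n}.Finite := by
  induction n with
  | zero =>
    apply Set.Finite.subset (Set.finite_singleton leaf)
    rintro (_ | ⟨a, b⟩) hz
    · simp
    · simp [size] at hz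
  | succ n ih =>
    apply Set.Finite.subset ((Set.Finite.image2 node ih ih).insert leaf)
    rintro (_ | ⟨a, b⟩) hz
    · simp
    · simp only [Set.mem_setOf_eq, size] at hz
      exact Set.mem_insert_iff.mpr
        (Or.inr (Set.mem_image2.mpr ⟨a, by simp only [Set.mem_setOf_eq]; omega, b, by simp only [Set.mem_setOf_eq]; omega, rfl⟩))

theorem finite_size (n : ℕ) : {z : PBT | z.size = n}.Finite :=
  (finite_size_le n).subset fun _ hz => le_of_eq hz

theorem finite_tle_right (x : PBT) : {y : PBT | tle y x}.Finite :=
  (finite_size x.size).subset fun _ hy => hy.size_eq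

theorem finite_tle_left (x : PBT) : {y : PBT | tle x y}.Finite :=
  (finite_size x.size).subset fun _ hy => hy.size_eq.symm

theorem finite_interval (x y : PBT) :
    {z : PBT | tle (over' x y) z ∧ tle z (under x y)}.Finite :=
  (finite_tle_right (under x y)).subset fun _ hz => hz.2

end PBT

/-- The free abelian group `ℤY = ⊕ₙ ℤYₙ` on the set of all planar binary trees. -/
abbrev ZY : Type := PBT →₀ ℤ

namespace PBT

/-- The basis element `S_x` of `ℤY`. -/
noncomputable def S (x : PBT) : ZY := Finsupp.single x 1

/-- The class `P_x = ∑_{y ≤ x} S_y` of the projective module. -/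
noncomputable def P (x : PBT) : ZY := ∑ y ∈ (finite_tle_right x).toFinset, S y

/-- The class `I_x = ∑_{y ≥ x} S_y` of the injective module. -/
noncomputable def I (x : PBT) : ZY := ∑ y ∈ (finite_tle_left x).toFinset, S y

/-- The Loday-Ronco product on basis elements:
`S_x * S_y = ∑_{x/y ≤ z ≤ x∖y} S_z`. -/
noncomputable def starB (x y : PBT) : ZY := ∑ z ∈ (finite_interval x y).toFinset, S z

/-- Bilinear extension of a product defined on basis elements. -/
noncomputable def bilin (f : PBT → PBT → ZY) (a b : ZY) : ZY :=
  a.sum fun x ax => b.sum fun y byy => (ax * byy) • f x y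

/-- The product `/` on `ℤY`, with `S_x / S_y = S_{x/y}`. -/
noncomputable def overM : ZY → ZY → ZY := bilin fun x y => S (x.over' y)

/-- The product `∖` on `ℤY`, with `S_x ∖ S_y = S_{x∖y}`. -/
noncomputable def underM : ZY → ZY → ZY := bilin fun x y => S (x.under y)

/-- The Loday-Ronco product `*` on `ℤY`. -/
noncomputable def starM : ZY → ZY → ZY := bilin starB

/-- The unique planar binary tree `•` with one internal vertex. -/
def dot : PBT := node leaf leaf

end PBT

/-!
The interval `[x/y, x∖y]` consists exactly of the shuffles of the right arm of `x` with the
left arm of `y`, and a shuffle determines its two factors once the size of the second one is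
fixed. Since a rotation of a shuffle of `x` and `y` is a shuffle of rotations of `x` and `y`,
every `z ≥ x/y` is a shuffle of some `x' ≥ x` and `y' ≥ y`; so the upper set of `x/y` is the
disjoint union of the intervals `[x'/y', x'∖y']` over `x' ≥ x`, `y' ≥ y`, which is
`I_{x/y} = I_x * I_y`. Likewise every `z ≥ x∖y` is `x'∖y'` for some `x' ≥ x`, `y' ≥ y`, unique
because `∖` is injective once the size of the second factor is fixed: this is
`I_{x∖y} = I_x ∖ I_y`.
-/

namespace PBT

@[simp]
lemma leaf_over' (y : PBT) : leaf.over' y = y := by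
  induction y with
  | leaf => rfl
  | node a b iha _ => simp [over', iha]

@[simp]
lemma under_leaf (x : PBT) : x.under leaf = x := by
  induction x with
  | leaf => rfl
  | node a b _ ihb => simp [under, ihb]

lemma size_eq_zero_iff {x : PBT} : x.size = 0 ↔ x = leaf := by
  cases x <;> simp [size]

lemma tle.refl (x : PBT) : tle x x := Relation.ReflTransGen.refl

lemma tle.trans {x y z : PBT} (h : tle x y) (h' : tle y z) : tle x z :=
  Relation.ReflTransGen.trans h h'

lemma Rot.tle {x y : PBT} (h : Rot x y) : tle x y := Relation.ReflTransGen.single h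

lemma tle.map {f : PBT → PBT} (hf : ∀ {a b : PBT}, Rot a b → Rot (f a) (f b)) {x y : PBT}
    (h : tle x y) : tle (f x) (f y) :=
  h.lift f fun _ _ => hf

lemma tle.node_left {a a' : PBT} (h : tle a a') (b : PBT) : tle (node a b) (node a' b) :=
  h.map (f := (node · b)) (·.left b)

lemma tle.node_right (a : PBT) {b b' : PBT} (h : tle b b') : tle (node a b) (node a b') :=
  h.map (·.right a)

lemma Rot.over'_left {x x' : PBT} (h : Rot x x') (y : PBT) : Rot (x.over' y) (x'.over' y) := by
  induction y with
  | leaf => exact h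
  | node _ b ih _ => exact ih.left b

lemma Rot.over'_right (x : PBT) {y y' : PBT} (h : Rot y y') :
    Rot (x.over' y) (x.over' y') := by
  induction h with
  | rot a b c => exact .rot (x.over' a) b c
  | left b _ ih => exact ih.left b
  | right a h _ => exact h.right _

lemma Rot.under_left {x x' : PBT} (h : Rot x x') (y : PBT) : Rot (x.under y) (x'.under y) := by
  induction h with
  | rot a b c => exact .rot a b (c.under y)
  | left b h _ => exact h.left _
  | right a _ ih => exact ih.right a

lemma Rot.under_right (x : PBT) {y y' : PBT} (h : Rot y y') :
    Rot (x.under y) (x.under y') := by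
  induction x with
  | leaf => exact h
  | node a _ _ ih => exact ih.right a

lemma tle.over' {x x' y y' : PBT} (hx : tle x x') (hy : tle y y') :
    tle (x.over' y) (x'.over' y') :=
  (hx.map (f := (·.over' y)) (·.over'_left y)).trans (hy.map (·.over'_right x'))

lemma tle.under {x x' y y' : PBT} (hx : tle x x') (hy : tle y y') :
    tle (x.under y) (x'.under y') :=
  (hx.map (f := (·.under y)) (·.under_left y)).trans (hy.map (·.under_right x'))

lemma node_over'_tle (x₁ x₂ y : PBT) : tle ((node x₁ x₂).over' y) (node x₁ (x₂.over' y)) := by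
  induction y with
  | leaf => exact tle.refl _
  | node a b iha _ => exact (iha.node_left b).trans (Rot.rot x₁ (x₂.over' a) b).tle

lemma node_under_tle (x a b : PBT) : tle (node (x.under a) b) (x.under (node a b)) := by
  induction x with
  | leaf => exact tle.refl _
  | node x₁ x₂ _ ih => exact (Rot.rot x₁ (x₂.under a) b).tle.trans (ih.node_right x₁)

/-- The rotation `((a,b),c) ↦ (a,(b,c))` raises this weight by `c.size + 1`. -/
def rightWeight : PBT → ℕ
  | leaf => 0
  | node a b => a.rightWeight + b.rightWeight + b.size

lemma Rot.rightWeight_lt {x y : PBT} (h : Rot x y) : x.rightWeight < y.rightWeight := by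
  induction h with
  | rot a b c => simp only [rightWeight, size]; omega
  | left b _ ih => simp only [rightWeight]; omega
  | right a h ih => simp only [rightWeight, h.size_eq]; omega

lemma tle.rightWeight_le {x y : PBT} (h : tle x y) : x.rightWeight ≤ y.rightWeight := by
  induction h with
  | refl => exact le_rfl
  | tail _ h ih => exact ih.trans h.rightWeight_lt.le

lemma tle_antisymm {x y : PBT} (h : tle x y) (h' : tle y x) : x = y := by
  rcases h.cases_head with rfl | ⟨c, hc, hcy⟩
  · rfl
  · exact absurd (hc.rightWeight_lt.trans_le ((tle.rightWeight_le hcy).trans h'.rightWeight_le))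
      (lt_irrefl _)

/-- `IsShuffle x y z`: `z` is obtained by interleaving the right arm of `x` (the path from the
root to the rightmost leaf, with the left subtrees hanging from it) with the left arm of `y`. -/
inductive IsShuffle : PBT → PBT → PBT → Prop
  | leaf_left (y : PBT) : IsShuffle leaf y y
  | leaf_right (x : PBT) : IsShuffle x leaf x
  | node_left {x y₁ z₁ : PBT} (y₂ : PBT) :
      IsShuffle x y₁ z₁ → IsShuffle x (node y₁ y₂) (node z₁ y₂)
  | node_right (x₁ : PBT) {x₂ y z₂ : PBT} :
      IsShuffle x₂ y z₂ → IsShuffle (node x₁ x₂) y (node x₁ z₂)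

namespace IsShuffle

lemma size_eq {x y z : PBT} (h : IsShuffle x y z) : z.size = x.size + y.size := by
  induction h with
  | leaf_left => simp [size]
  | leaf_right => simp [size]
  | node_left _ _ ih => simp only [size, ih]; omega
  | node_right _ _ ih => simp only [size, ih]; omega

lemma over' (x y : PBT) : IsShuffle x y (x.over' y) := by
  induction y with
  | leaf => exact leaf_right x
  | node _ b ih _ => exact ih.node_left b

lemma under (x y : PBT) : IsShuffle x y (x.under y) := by
  induction x with
  | leaf => exact leaf_left y
  | node a _ _ ih => exact ih.node_right a

lemma eq_of_leaf_left {y z : PBT} (h : IsShuffle leaf y z) : z = y := by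
  generalize hx : leaf = x at h
  induction h with
  | leaf_left => rfl
  | leaf_right => exact hx.symm
  | node_left b _ ih => rw [ih hx]
  | node_right => cases hx

lemma eq_of_leaf_right {x z : PBT} (h : IsShuffle x leaf z) : z = x := by
  generalize hy : leaf = y at h
  induction h with
  | leaf_left => exact hy.symm
  | leaf_right => rfl
  | node_left => cases hy
  | node_right a _ ih => rw [ih hy]

lemma over'_tle {x y z : PBT} (h : IsShuffle x y z) : tle (x.over' y) z := by
  induction h with
  | leaf_left => simpa using tle.refl _
  | leaf_right => exact tle.refl _
  | node_left y₂ _ ih => exact ih.node_left y₂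
  | node_right x₁ _ ih => exact (node_over'_tle x₁ _ _).trans (ih.node_right x₁)

lemma tle_under {x y z : PBT} (h : IsShuffle x y z) : tle z (x.under y) := by
  induction h with
  | leaf_left => exact tle.refl _
  | leaf_right => simpa using tle.refl _
  | node_left y₂ _ ih => exact (ih.node_left y₂).trans (node_under_tle _ _ _)
  | node_right x₁ _ ih => exact ih.node_right x₁


lemma exists_of_rot_up {x y z w : PBT} (h : IsShuffle x y z) (hr : Rot z w) :
    ∃ x' y', tle x x' ∧ tle y y' ∧ IsShuffle x' y' w := by
  induction h generalizing w with
  | leaf_left => exact ⟨leaf, w, tle.refl _, hr.tle, leaf_left w⟩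
  | leaf_right => exact ⟨w, leaf, hr.tle, tle.refl _, leaf_right w⟩
  | @node_left x y₁ z₁ y₂ h ih =>
    cases hr with
    | rot a b =>
      cases h with
      | leaf_left => exact ⟨leaf, _, tle.refl _, (Rot.rot a b y₂).tle, leaf_left _⟩
      | leaf_right => exact ⟨_, node leaf y₂, tle.refl _, tle.refl _,
          ((leaf_right b).node_left y₂).node_right a⟩
      | @node_left _ v₁ _ _ h' => exact ⟨x, _, tle.refl _, (Rot.rot v₁ b y₂).tle,
          h'.node_left (node b y₂)⟩
      | node_right _ h' => exact ⟨_, _, tle.refl _, tle.refl _, (h'.node_left y₂).node_right a⟩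
    | left _ hr' =>
      obtain ⟨x', y₁', hx, hy, h'⟩ := ih hr'
      exact ⟨x', node y₁' y₂, hx, hy.node_left y₂, h'.node_left y₂⟩
    | right _ hr' => exact ⟨x, node y₁ _, tle.refl _, hr'.tle.node_right y₁, h.node_left _⟩
  | @node_right x₁ x₂ y z₂ h ih =>
    cases hr with
    | rot a b _ => exact ⟨node a (node b x₂), y, (Rot.rot a b x₂).tle, tle.refl _,
        (h.node_right b).node_right a⟩
    | left _ hr' => exact ⟨node _ x₂, y, hr'.tle.node_left x₂, tle.refl _, h.node_right _⟩
    | right _ hr' =>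
      obtain ⟨x₂', y', hx, hy, h'⟩ := ih hr'
      exact ⟨node x₁ x₂', y', hx.node_right x₁, hy, h'.node_right x₁⟩

lemma exists_of_rot_down {x y z w : PBT} (h : IsShuffle x y w) (hr : Rot z w) :
    ∃ x' y', tle x' x ∧ tle y' y ∧ IsShuffle x' y' z := by
  induction h generalizing z with
  | leaf_left => exact ⟨leaf, z, tle.refl _, hr.tle, leaf_left z⟩
  | leaf_right => exact ⟨z, leaf, hr.tle, tle.refl _, leaf_right z⟩
  | @node_left x y₁ w₁ y₂ h ih =>
    cases hr with
    | rot _ b c => exact ⟨x, node (node y₁ b) c, tle.refl _, (Rot.rot y₁ b c).tle,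
        (h.node_left b).node_left c⟩
    | left _ hr' =>
      obtain ⟨x', y₁', hx, hy, h'⟩ := ih hr'
      exact ⟨x', node y₁' y₂, hx, hy.node_left y₂, h'.node_left y₂⟩
    | right _ hr' => exact ⟨x, node y₁ _, tle.refl _, hr'.tle.node_right y₁, h.node_left _⟩
  | @node_right x₁ x₂ y w₂ h ih =>
    cases hr with
    | rot _ b c =>
      cases h with
      | leaf_left => exact ⟨node x₁ leaf, _, tle.refl _, tle.refl _,
          ((leaf_left b).node_right x₁).node_left c⟩
      | leaf_right => exact ⟨_, leaf, (Rot.rot x₁ b c).tle, tle.refl _, leaf_right _⟩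
      | node_left _ h' => exact ⟨_, _, tle.refl _, tle.refl _, (h'.node_right x₁).node_left c⟩
      | @node_right _ u₂ _ _ h' => exact ⟨node (node x₁ b) u₂, y, (Rot.rot x₁ b u₂).tle,
          tle.refl _, h'.node_right (node x₁ b)⟩
    | left _ hr' => exact ⟨node _ x₂, y, hr'.tle.node_left x₂, tle.refl _, h.node_right _⟩
    | right _ hr' =>
      obtain ⟨x₂', y', hx, hy, h'⟩ := ih hr'
      exact ⟨node x₁ x₂', y', hx.node_right x₁, hy, h'.node_right x₁⟩


lemma unique_of_eq_leaf {x y x' y' z : PBT} (h : IsShuffle x y z) (h' : IsShuffle x' y' z)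
    (hs : y.size = y'.size) (hl : x = leaf ∨ y = leaf) : x = x' ∧ y = y' := by
  have hz := h.size_eq
  have hz' := h'.size_eq
  rcases hl with rfl | rfl
  · obtain rfl : x' = leaf := size_eq_zero_iff.mp (by simp only [size] at hz; omega)
    exact ⟨rfl, h.eq_of_leaf_left.symm.trans h'.eq_of_leaf_left⟩
  · obtain rfl : y' = leaf := size_eq_zero_iff.mp (by simp only [size] at hs; omega)
    exact ⟨h.eq_of_leaf_right.symm.trans h'.eq_of_leaf_right, rfl⟩

theorem unique {x y x' y' z : PBT} (h : IsShuffle x y z) (h' : IsShuffle x' y' z)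
    (hs : y.size = y'.size) : x = x' ∧ y = y' := by
  induction h generalizing x' y' with
  | leaf_left y => exact unique_of_eq_leaf (leaf_left y) h' hs (.inl rfl)
  | leaf_right x => exact unique_of_eq_leaf (leaf_right x) h' hs (.inr rfl)
  | node_left y₂ h ih =>
    cases h' with
    | leaf_left => exact (unique_of_eq_leaf (leaf_left _) (h.node_left y₂) hs.symm
        (.inl rfl)).imp Eq.symm Eq.symm
    | leaf_right => exact (unique_of_eq_leaf (leaf_right _) (h.node_left y₂) hs.symm
        (.inr rfl)).imp Eq.symm Eq.symm
    | node_left _ h'' =>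
      obtain ⟨rfl, rfl⟩ := ih h'' (by simp only [size] at hs; omega)
      exact ⟨rfl, rfl⟩
    | node_right _ h'' =>
      have := h''.size_eq
      simp only [size] at hs
      omega
  | node_right x₁ h ih =>
    cases h' with
    | leaf_left => exact (unique_of_eq_leaf (leaf_left _) (h.node_right x₁) hs.symm
        (.inl rfl)).imp Eq.symm Eq.symm
    | leaf_right => exact (unique_of_eq_leaf (leaf_right _) (h.node_right x₁) hs.symm
        (.inr rfl)).imp Eq.symm Eq.symm
    | node_left _ h'' =>
      have := h.size_eq
      simp only [size] at hs
      omega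
    | node_right _ h'' =>
      obtain ⟨rfl, rfl⟩ := ih h'' hs
      exact ⟨rfl, rfl⟩

end IsShuffle

lemma exists_isShuffle_of_over'_tle {x y z : PBT} (h : tle (x.over' y) z) :
    ∃ x' y', tle x x' ∧ tle y y' ∧ IsShuffle x' y' z := by
  induction h with
  | refl => exact ⟨x, y, tle.refl _, tle.refl _, .over' x y⟩
  | tail _ hr ih =>
    obtain ⟨x', y', hx, hy, h⟩ := ih
    obtain ⟨x'', y'', hx', hy', h'⟩ := h.exists_of_rot_up hr
    exact ⟨x'', y'', hx.trans hx', hy.trans hy', h'⟩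

lemma exists_isShuffle_of_tle_under {x y z : PBT} (h : tle z (x.under y)) :
    ∃ x' y', tle x' x ∧ tle y' y ∧ IsShuffle x' y' z := by
  induction h using Relation.ReflTransGen.head_induction_on with
  | refl => exact ⟨x, y, tle.refl _, tle.refl _, .under x y⟩
  | head hr _ ih =>
    obtain ⟨x', y', hx, hy, h⟩ := ih
    obtain ⟨x'', y'', hx', hy', h'⟩ := h.exists_of_rot_down hr
    exact ⟨x'', y'', hx'.trans hx, hy'.trans hy, h'⟩

theorem isShuffle_iff {x y z : PBT} :
    IsShuffle x y z ↔ tle (x.over' y) z ∧ tle z (x.under y) := by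
  refine ⟨fun h => ⟨h.over'_tle, h.tle_under⟩, fun ⟨hlo, hhi⟩ => ?_⟩
  obtain ⟨x₁, y₁, hx₁, hy₁, h₁⟩ := exists_isShuffle_of_over'_tle hlo
  obtain ⟨x₂, y₂, hx₂, hy₂, h₂⟩ := exists_isShuffle_of_tle_under hhi
  obtain ⟨rfl, rfl⟩ := h₁.unique h₂ (hy₁.size_eq.symm.trans hy₂.size_eq.symm)
  rwa [tle_antisymm hx₁ hx₂, tle_antisymm hy₁ hy₂]



lemma exists_under_eq_of_rot {x y z : PBT} (h : Rot (x.under y) z) :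
    ∃ x' y', z = x'.under y' ∧ tle x x' ∧ tle y y' := by
  induction x generalizing z with
  | leaf => exact ⟨leaf, z, rfl, tle.refl _, h.tle⟩
  | node x₁ x₂ _ ih =>
    cases h with
    | rot a b => exact ⟨node a (node b x₂), y, rfl, (Rot.rot a b x₂).tle, tle.refl _⟩
    | left _ h => exact ⟨node _ x₂, y, rfl, h.tle.node_left x₂, tle.refl _⟩
    | right _ h =>
      obtain ⟨x₂', y', rfl, hx, hy⟩ := ih h
      exact ⟨node x₁ x₂', y', rfl, hx.node_right x₁, hy⟩

lemma exists_under_eq_of_under_tle {x y z : PBT} (h : tle (x.under y) z) :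
    ∃ x' y', z = x'.under y' ∧ tle x x' ∧ tle y y' := by
  induction h with
  | refl => exact ⟨x, y, rfl, tle.refl _, tle.refl _⟩
  | tail _ hr ih =>
    obtain ⟨x', y', rfl, hx, hy⟩ := ih
    obtain ⟨x'', y'', rfl, hx', hy'⟩ := exists_under_eq_of_rot hr
    exact ⟨x'', y'', rfl, hx.trans hx', hy.trans hy'⟩

lemma under_inj {x y x' y' : PBT} (h : x.under y = x'.under y') (hs : y.size = y'.size) :
    x = x' ∧ y = y' :=
  (IsShuffle.under x y).unique (h ▸ IsShuffle.under x' y') hs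

lemma mem_toFinset_tle_left {x z : PBT} : z ∈ (finite_tle_left x).toFinset ↔ tle x z :=
  Set.Finite.mem_toFinset _

lemma mem_toFinset_interval {x y z : PBT} :
    z ∈ (finite_interval x y).toFinset ↔ IsShuffle x y z :=
  (Set.Finite.mem_toFinset _).trans isShuffle_iff.symm

lemma pairwiseDisjoint_interval {s : Set (PBT × PBT)} {n : ℕ} (hs : ∀ p ∈ s, p.2.size = n) :
    s.PairwiseDisjoint fun p => (finite_interval p.1 p.2).toFinset := by
  intro p hp q hq hpq
  refine Finset.disjoint_left.mpr fun z hzp hzq => hpq ?_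
  rw [mem_toFinset_interval] at hzp hzq
  obtain ⟨h₁, h₂⟩ := hzp.unique hzq ((hs p hp).trans (hs q hq).symm)
  exact Prod.ext h₁ h₂

lemma injOn_under {s : Set (PBT × PBT)} {n : ℕ} (hs : ∀ p ∈ s, p.2.size = n) :
    s.InjOn fun p => p.1.under p.2 := fun p hp q hq h =>
  Prod.ext_iff.mpr (under_inj h ((hs p hp).trans (hs q hq).symm))

lemma toFinset_tle_left_over' (x y : PBT) :
    (finite_tle_left (x.over' y)).toFinset =
      ((finite_tle_left x).toFinset ×ˢ (finite_tle_left y).toFinset).biUnion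
        fun p => (finite_interval p.1 p.2).toFinset := by
  ext z
  simp only [Finset.mem_biUnion, Finset.mem_product, mem_toFinset_tle_left,
    mem_toFinset_interval]
  constructor
  · intro h
    obtain ⟨x', y', hx, hy, h'⟩ := exists_isShuffle_of_over'_tle h
    exact ⟨(x', y'), ⟨hx, hy⟩, h'⟩
  · rintro ⟨p, ⟨hx, hy⟩, h⟩
    exact (hx.over' hy).trans h.over'_tle

lemma toFinset_tle_left_under (x y : PBT) :
    (finite_tle_left (x.under y)).toFinset =
      ((finite_tle_left x).toFinset ×ˢ (finite_tle_left y).toFinset).image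
        fun p => p.1.under p.2 := by
  ext z
  simp only [Finset.mem_image, Finset.mem_product, mem_toFinset_tle_left]
  constructor
  · intro h
    obtain ⟨x', y', rfl, hx, hy⟩ := exists_under_eq_of_under_tle h
    exact ⟨(x', y'), ⟨hx, hy⟩, rfl⟩
  · rintro ⟨p, ⟨hx, hy⟩, rfl⟩
    exact hx.under hy

lemma bilin_sum_S_sum_S (f : PBT → PBT → ZY) (A B : Finset PBT) :
    bilin f (∑ a ∈ A, S a) (∑ b ∈ B, S b) = ∑ p ∈ A ×ˢ B, f p.1 p.2 := by
  simp only [bilin, S]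
  rw [← Finsupp.sum_finsetSum_index (by simp) (by simp [add_mul, add_smul, Finsupp.sum_add]),
    Finset.sum_product]
  refine Finset.sum_congr rfl fun a _ => ?_
  rw [Finsupp.sum_single_index (by simp),
    ← Finsupp.sum_finsetSum_index (by simp) (by simp [mul_add, add_smul])]
  simp

end PBT

open PBT in
/-- For all planar binary trees `x, y` : `I_{x/y} = I_x * I_y` and
`I_{x∖y} = I_x ∖ I_y` in `ℤY`. -/
theorem I_basis_products (x y : PBT) :
    I (x.over' y) = starM (I x) (I y) ∧ I (x.under y) = underM (I x) (I y) := by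
  have hsize : ∀ p ∈ (↑((finite_tle_left x).toFinset ×ˢ (finite_tle_left y).toFinset) :
      Set (PBT × PBT)), p.2.size = y.size := fun p hp =>
    (mem_toFinset_tle_left.mp (Finset.mem_product.mp hp).2).size_eq.symm
  simp only [I, starM, underM, bilin_sum_S_sum_S]
  constructor
  · rw [toFinset_tle_left_over', Finset.sum_biUnion (pairwiseDisjoint_interval hsize)]
    rfl
  · rw [toFinset_tle_left_under, Finset.sum_image (injOn_under hsize)]
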